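/- Let κ < 0 and α ∈ ℂ. Then the function w(s) := (cosh(√(−κ)·s/2))^{−2α}·F(α, α; 1; tanh²(√(−κ)·s/2)) satisfies −w''(s) − √(−κ)·coth(√(−κ)·s)·w'(s) = κ·α(α−1)·w(s) for every s > 0. -/

import Mathlib

/-!
The series `F = ₂F₁(α, α; 1; ·)` solves the hypergeometric equation
`z(1-z)F'' + (1-(2α+1)z)F' - α²F = 0` on the unit disc, as one reads off from the recurrence of
its coefficients. Then `g(z) = (1-z)^α F(z)` satisfies `(1-z)²(z g'' + g') = α(α-1) g`. Finally,
with `q = √(-κ)` and `z = tanh²(qs/2)` we have `cosh(qs/2)^(-2α) = (1-z)^α`, so `w(s) = g(z)`, and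
the chain rule turns `-w'' - q coth(qs) w'` into `-q²(1-z)²(z g'' + g')`.
-/

/-- The Gauss hypergeometric function F(a,b;c;x), defined for real x with |x| < 1 by its
power series, with Pochhammer symbols (a)_k = a(a+1)⋯(a+k−1). -/
noncomputable def hypF (a b c : ℂ) (x : ℝ) : ℂ :=
  ∑' k : ℕ, ((ascPochhammer ℂ k).eval a * (ascPochhammer ℂ k).eval b /
    ((ascPochhammer ℂ k).eval c * (Nat.factorial k : ℂ))) * (x : ℂ) ^ k

open FormalMultilinearSeries Real

theorem Metric.eball_one_eq_ball {X : Type*} [PseudoMetricSpace X] (x : X) :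
    eball x 1 = ball x 1 := by
  simpa using eball_ofReal (x := x) (ε := 1)

section PowerSeries

variable {𝕜 : Type*} [NontriviallyNormedField 𝕜]

theorem hasSum_mul_pow_of_hasSum_shift {f : ℕ → 𝕜} {z s : 𝕜} (k : ℕ) (hf : ∀ i < k, f i = 0)
    (h : HasSum (fun n ↦ f (n + k) * z ^ n) s) : HasSum (fun n ↦ f n * z ^ n) (z ^ k * s) := by
  rw [← hasSum_nat_add_iff' k, Finset.sum_eq_zero fun i hi ↦ by
    rw [hf i (Finset.mem_range.mp hi), zero_mul], sub_zero]
  simpa only [pow_add, mul_left_comm, mul_assoc, mul_comm (z ^ k)] using h.mul_left (z ^ k)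

variable {f : 𝕜 → 𝕜} {C : ℕ → 𝕜} {x : 𝕜} {r : ENNReal}

theorem HasFPowerSeriesOnBall.hasSum_coeff_mul_pow
    (h : HasFPowerSeriesOnBall f (ofScalars 𝕜 C) 0 r) {z : 𝕜} (hz : z ∈ Metric.eball 0 r) :
    HasSum (fun n ↦ C n * z ^ n) (f z) := by
  simpa [ofScalars_apply_eq, mul_comm] using h.hasSum hz

variable [CompleteSpace 𝕜]

theorem HasFPowerSeriesOnBall.deriv_ofScalars (h : HasFPowerSeriesOnBall f (ofScalars 𝕜 C) x r) :
    HasFPowerSeriesOnBall (deriv f) (ofScalars 𝕜 fun n ↦ (n + 1) * C (n + 1)) x r := by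
  have hf := (ContinuousLinearMap.apply 𝕜 𝕜 (1 : 𝕜)).comp_hasFPowerSeriesOnBall h.fderiv
  rw [show ⇑(ContinuousLinearMap.apply 𝕜 𝕜 (1 : 𝕜)) ∘ fderiv 𝕜 f = deriv f from
    funext fun y ↦ fderiv_apply_one_eq_deriv] at hf
  convert hf using 1
  ext n
  simp

theorem HasFPowerSeriesOnBall.hypergeometric_ode_of_recurrence {a b c : 𝕜}
    (hC : ∀ n : ℕ, (n + 1) * (c + n) * C (n + 1) = (a + n) * (b + n) * C n)
    (h : HasFPowerSeriesOnBall f (ofScalars 𝕜 C) 0 r) {z : 𝕜} (hz : z ∈ Metric.eball 0 r) :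
    z * (1 - z) * deriv (deriv f) z + (c - (a + b + 1) * z) * deriv f z - a * b * f z = 0 := by
  have h₁ := h.deriv_ofScalars
  have S₀ := h.hasSum_coeff_mul_pow hz
  have S₁ := h₁.hasSum_coeff_mul_pow hz
  have S₂ := h₁.deriv_ofScalars.hasSum_coeff_mul_pow hz
  have T₁ : HasSum (fun n : ℕ ↦ (n * C n) * z ^ n) (z ^ 1 * deriv f z) :=
    hasSum_mul_pow_of_hasSum_shift 1 (by simp) (by simpa using S₁)
  have T₂ : HasSum (fun n : ℕ ↦ (n * ((n + 1) * C (n + 1))) * z ^ n)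
      (z ^ 1 * deriv (deriv f) z) :=
    hasSum_mul_pow_of_hasSum_shift 1 (by simp) <| by
      simpa [add_assoc, one_add_one_eq_two] using S₂
  have T₃ : HasSum (fun n : ℕ ↦ (n * (n - 1) * C n) * z ^ n) (z ^ 2 * deriv (deriv f) z) :=
    hasSum_mul_pow_of_hasSum_shift 2 (by intro i hi; interval_cases i <;> simp) <| by
      convert S₂ using 3 with n
      push_cast
      ring
  have := ((T₂.sub T₃).add (S₁.mul_left c)).sub
    ((T₁.mul_left (a + b + 1)).add (S₀.mul_left (a * b)))
  -- the `n`-th coefficient of this series is `(n+1)(c+n)C(n+1) - (a+n)(b+n)C(n)`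
  convert this.unique ?_ using 1
  · ring
  convert hasSum_zero with n
  linear_combination z ^ n * hC n

end PowerSeries

theorem ordinaryHypergeometricCoefficient_recurrence {K : Type*} [Field K] [CharZero K]
    (a b c : K) (n : ℕ) (hc : c + n ≠ 0) :
    (n + 1) * (c + n) * ordinaryHypergeometricCoefficient a b c (n + 1) =
      (a + n) * (b + n) * ordinaryHypergeometricCoefficient a b c n := by
  simp only [ordinaryHypergeometricCoefficient, ascPochhammer_succ_eval, Nat.factorial_succ,
    Nat.cast_mul, Nat.cast_succ, mul_inv]
  field_simp

section Hypergeometric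

variable {𝕂 : Type*} [RCLike 𝕂] (a b c : 𝕂)

theorem one_le_radius_ordinaryHypergeometricSeries (hc : ∀ k : ℕ, c ≠ -k) :
    1 ≤ (ordinaryHypergeometricSeries 𝕂 a b c).radius := by
  by_cases ha : ∃ k : ℕ, a = -k
  · obtain ⟨k, rfl⟩ := ha
    simp [ordinaryHypergeometric_radius_top_of_neg_nat₁]
  by_cases hb : ∃ k : ℕ, b = -k
  · obtain ⟨k, rfl⟩ := hb
    simp [ordinaryHypergeometric_radius_top_of_neg_nat₂]
  push Not at ha hb
  rw [ordinaryHypergeometricSeries_radius_eq_one]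
  intro k
  refine ⟨fun h ↦ ha k ?_, fun h ↦ hb k ?_, fun h ↦ hc k ?_⟩ <;> linear_combination h

theorem hasFPowerSeriesOnBall_ordinaryHypergeometric (hc : ∀ k : ℕ, c ≠ -k) :
    HasFPowerSeriesOnBall (₂F₁ a b c : 𝕂 → 𝕂) (ordinaryHypergeometricSeries 𝕂 a b c) 0 1 := by
  have h := one_le_radius_ordinaryHypergeometricSeries a b c hc
  exact ((ordinaryHypergeometricSeries 𝕂 a b c).hasFPowerSeriesOnBall (one_pos.trans_le h)).mono
    one_pos h

theorem analyticOnNhd_ordinaryHypergeometric (hc : ∀ k : ℕ, c ≠ -k) :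
    AnalyticOnNhd 𝕂 (₂F₁ a b c : 𝕂 → 𝕂) (Metric.ball 0 1) :=
  Metric.eball_one_eq_ball (0 : 𝕂) ▸
    (hasFPowerSeriesOnBall_ordinaryHypergeometric a b c hc).analyticOnNhd

theorem ordinaryHypergeometric_ode (hc : ∀ k : ℕ, c ≠ -k) {z : 𝕂} (hz : z ∈ Metric.ball 0 1) :
    z * (1 - z) * deriv (deriv (₂F₁ a b c)) z + (c - (a + b + 1) * z) * deriv (₂F₁ a b c) z
      - a * b * ₂F₁ a b c z = 0 :=
  (hasFPowerSeriesOnBall_ordinaryHypergeometric a b c hc).hypergeometric_ode_of_recurrence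
    (fun n ↦ ordinaryHypergeometricCoefficient_recurrence a b c n <| by
      rw [← sub_neg_eq_add]; exact sub_ne_zero.mpr (hc n))
    (Metric.eball_one_eq_ball (0 : 𝕂) ▸ hz)

end Hypergeometric

theorem hypF_eq_ordinaryHypergeometric (a b c : ℂ) (x : ℝ) :
    hypF a b c x = ₂F₁ a b c (x : ℂ) := by
  rw [hypF, ordinaryHypergeometric, ordinaryHypergeometric_sum_eq]
  refine tsum_congr fun k ↦ ?_
  rw [smul_eq_mul, div_eq_mul_inv, mul_inv]
  ring

theorem ofReal_cosh_cpow_neg_two_mul (x : ℝ) (α : ℂ) :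
    (cosh x : ℂ) ^ (-2 * α) = (1 - ((tanh x ^ 2 : ℝ) : ℂ)) ^ α := by
  have hc := cosh_pos x
  have h : 1 - ((tanh x ^ 2 : ℝ) : ℂ) = ((cosh x ^ 2)⁻¹ : ℝ) := by
    rw [tanh_eq_sinh_div_cosh, ← Complex.ofReal_one, ← Complex.ofReal_sub]
    congr 1
    field_simp
    linear_combination cosh_sq_sub_sinh_sq x
  rw [h, Complex.cpow_def_of_ne_zero (by exact_mod_cast hc.ne'),
    Complex.cpow_def_of_ne_zero (by exact_mod_cast (inv_pos.mpr (pow_pos hc 2)).ne'),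
    ← Complex.ofReal_log hc.le, ← Complex.ofReal_log (by positivity), Real.log_inv, Real.log_pow]
  push_cast
  ring_nf

theorem one_ne_neg_natCast (k : ℕ) : (1 : ℂ) ≠ -k := by
  intro h
  have := congrArg Complex.re h
  simp only [Complex.one_re, Complex.neg_re, Complex.natCast_re] at this
  linarith [k.cast_nonneg (α := ℝ)]

theorem one_sub_mem_slitPlane_of_mem_ball {z : ℂ} (hz : z ∈ Metric.ball 0 1) :
    1 - z ∈ Complex.slitPlane :=
  Complex.mem_slitPlane_iff.mpr <| Or.inl <| by
    simpa using (Complex.re_le_norm z).trans_lt (mem_ball_zero_iff.mp hz)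

theorem hasDerivAt_one_sub_cpow {α z : ℂ} (hz : 1 - z ∈ Complex.slitPlane) :
    HasDerivAt (fun y ↦ (1 - y) ^ α) (-α * (1 - z) ^ α / (1 - z)) z := by
  have hz0 : 1 - z ≠ 0 := Complex.slitPlane_ne_zero hz
  refine (((hasDerivAt_id' z).const_sub 1).cpow_const (c := α) hz).congr_deriv ?_
  rw [Complex.cpow_sub _ _ hz0, Complex.cpow_one]
  ring

theorem analyticOnNhd_one_sub_cpow {α : ℂ} :
    AnalyticOnNhd ℂ (fun z : ℂ ↦ ((1 - z) ^ α : ℂ)) (Metric.ball 0 1) :=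
  DifferentiableOn.analyticOnNhd (fun _ hz ↦
    (hasDerivAt_one_sub_cpow (one_sub_mem_slitPlane_of_mem_ball hz)).differentiableAt
      |>.differentiableWithinAt) Metric.isOpen_ball

theorem ofReal_tanh_sq_mem_ball (x : ℝ) : ((tanh x ^ 2 : ℝ) : ℂ) ∈ Metric.ball 0 1 := by
  rw [mem_ball_zero_iff, Complex.norm_real, Real.norm_of_nonneg (sq_nonneg _)]
  exact tanh_sq_lt_one x

theorem one_sub_cpow_mul_ode_of_hypergeometric_ode {F g : ℂ → ℂ} {α z : ℂ}
    (hF : AnalyticOnNhd ℂ F (Metric.ball 0 1)) (hg : ∀ y, g y = (1 - y) ^ α * F y)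
    (hz : z ∈ Metric.ball 0 1)
    (hode : z * (1 - z) * deriv (deriv F) z + (1 - (2 * α + 1) * z) * deriv F z
      - α ^ 2 * F z = 0) :
    (1 - z) ^ 2 * (z * deriv (deriv g) z + deriv g z) = α * (α - 1) * g z := by
  set g' : ℂ → ℂ := fun y ↦ (1 - y) ^ α * (deriv F y - α * F y / (1 - y))
  have hg' : ∀ y ∈ Metric.ball (0 : ℂ) 1, HasDerivAt g (g' y) y := by
    intro y hy
    rw [funext hg]
    refine ((hasDerivAt_one_sub_cpow (one_sub_mem_slitPlane_of_mem_ball hy)).mul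
      (hF y hy).differentiableAt.hasDerivAt).congr_deriv ?_
    ring
  have hderiv : deriv g =ᶠ[nhds z] g' :=
    Filter.eventually_of_mem (Metric.isOpen_ball.mem_nhds hz) fun y hy ↦ (hg' y hy).deriv
  have hz0 : 1 - z ≠ 0 := Complex.slitPlane_ne_zero (one_sub_mem_slitPlane_of_mem_ball hz)
  have hg'' : HasDerivAt g' _ z :=
    (hasDerivAt_one_sub_cpow (α := α) (one_sub_mem_slitPlane_of_mem_ball hz)).mul
      (((hF.deriv z hz).differentiableAt.hasDerivAt).sub
        (((hF z hz).differentiableAt.hasDerivAt.const_mul α).div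
          ((hasDerivAt_id z).const_sub 1) hz0))
  rw [hderiv.deriv_eq, hg''.deriv, (hg' z hz).deriv, hg]
  dsimp only [g']
  field_simp
  linear_combination (1 - z) ^ α * (1 - z) * hode

theorem Real.hasDerivAt_tanh (x : ℝ) : HasDerivAt tanh (1 - tanh x ^ 2) x := by
  have hc := (cosh_pos x).ne'
  rw [show tanh = fun y ↦ sinh y / cosh y from funext tanh_eq_sinh_div_cosh]
  refine ((hasDerivAt_sinh x).div (hasDerivAt_cosh x) hc).congr_deriv ?_
  field_simp

theorem HasDerivAt.tanh {f : ℝ → ℝ} {f' x : ℝ} (hf : HasDerivAt f f' x) :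
    HasDerivAt (fun y ↦ Real.tanh (f y)) ((1 - Real.tanh (f x) ^ 2) * f') x :=
  (hasDerivAt_tanh (f x)).comp x hf

theorem cosh_two_mul_div_sinh_two_mul {x : ℝ} (hx : x ≠ 0) :
    cosh (2 * x) / sinh (2 * x) = (1 + tanh x ^ 2) / (2 * tanh x) := by
  have hs : sinh x ≠ 0 := sinh_ne_zero.mpr hx
  rw [cosh_two_mul, sinh_two_mul, tanh_eq_sinh_div_cosh]
  field_simp

theorem deriv_comp_ofReal {g : ℂ → ℂ} {φ φ' : ℝ → ℝ}
    (hg : ∀ s, DifferentiableAt ℂ g (φ s)) (hφ : ∀ s, HasDerivAt φ (φ' s) s) :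
    deriv (fun s ↦ g (φ s)) = fun s ↦ deriv g (φ s) * φ' s :=
  funext fun s ↦ ((hg s).hasDerivAt.comp s (hφ s).ofReal_comp).deriv

theorem deriv_deriv_comp_ofReal {g : ℂ → ℂ} {φ φ' : ℝ → ℝ} {φ'' u : ℝ}
    (hg : ∀ s, DifferentiableAt ℂ g (φ s)) (hg' : DifferentiableAt ℂ (deriv g) (φ u))
    (hφ : ∀ s, HasDerivAt φ (φ' s) s) (hφ' : HasDerivAt φ' φ'' u) :
    deriv (deriv fun s ↦ g (φ s)) u = deriv (deriv g) (φ u) * φ' u ^ 2 + deriv g (φ u) * φ'' := by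
  rw [deriv_comp_ofReal hg hφ]
  refine ((hg'.hasDerivAt.comp u (hφ u).ofReal_comp).mul hφ'.ofReal_comp).deriv.trans ?_
  simp only [Function.comp_apply]
  ring

theorem radial_laplacian_comp_tanh_sq {g : ℂ → ℂ} (hg : AnalyticOnNhd ℂ g (Metric.ball 0 1))
    {q s : ℝ} (hqs : q * s ≠ 0) :
    -deriv (deriv fun s : ℝ ↦ g (tanh (q * s / 2) ^ 2 : ℝ)) s
        - q * ((cosh (q * s) / sinh (q * s) : ℝ) : ℂ) *
          deriv (fun s : ℝ ↦ g (tanh (q * s / 2) ^ 2 : ℝ)) s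
      = -q ^ 2 * ((1 - (tanh (q * s / 2) ^ 2 : ℝ)) ^ 2 *
          ((tanh (q * s / 2) ^ 2 : ℝ) * deriv (deriv g) (tanh (q * s / 2) ^ 2 : ℝ)
            + deriv g (tanh (q * s / 2) ^ 2 : ℝ))) := by
  have hu (s : ℝ) : HasDerivAt (fun s ↦ q * s / 2) (q / 2) s := by
    simpa using ((hasDerivAt_id s).const_mul q).div_const 2
  have hφ (s : ℝ) : HasDerivAt (fun s ↦ tanh (q * s / 2) ^ 2)
      (q * tanh (q * s / 2) * (1 - tanh (q * s / 2) ^ 2)) s :=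
    ((hu s).tanh.pow 2).congr_deriv (by ring)
  have hφ' : HasDerivAt (fun s ↦ q * tanh (q * s / 2) * (1 - tanh (q * s / 2) ^ 2))
      (q ^ 2 / 2 * (1 - tanh (q * s / 2) ^ 2) * (1 - 3 * tanh (q * s / 2) ^ 2)) s :=
    (((hu s).tanh.const_mul q).mul (((hu s).tanh.pow 2).const_sub 1)).congr_deriv
      (by simp only [Pi.pow_apply]; ring)
  have hball (s : ℝ) := ofReal_tanh_sq_mem_ball (q * s / 2)
  have ht : tanh (q * s / 2) ≠ 0 := by
    rw [tanh_eq_sinh_div_cosh]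
    exact div_ne_zero (sinh_ne_zero.mpr (by positivity)) (cosh_pos _).ne'
  have hcoth :
      cosh (q * s) / sinh (q * s) = (1 + tanh (q * s / 2) ^ 2) / (2 * tanh (q * s / 2)) := by
    rw [← cosh_two_mul_div_sinh_two_mul (by positivity)]
    ring_nf
  rw [deriv_deriv_comp_ofReal (fun s ↦ (hg _ (hball s)).differentiableAt)
      ((hg.deriv _ (hball s)).differentiableAt) hφ hφ',
    deriv_comp_ofReal (fun s ↦ (hg _ (hball s)).differentiableAt) hφ, hcoth]
  beta_reduce
  -- for `φ(s) = tanh²(qs/2) = z`: `φ'² = q² z (1-z)²` and `φ'' + q coth(qs) φ' = q² (1-z)²`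
  set t := tanh (q * s / 2)
  have ht' : (t : ℂ) ≠ 0 := Complex.ofReal_ne_zero.mpr ht
  push_cast
  field_simp
  ring

/-- for κ < 0 and α ∈ ℂ, the function
w(s) := (cosh(√(−κ)s/2))^{−2α}·F(α,α;1;tanh²(√(−κ)s/2)) satisfies
−w''(s) − √(−κ)·coth(√(−κ)s)·w'(s) = κ·α(α−1)·w(s) for every s > 0. -/
theorem stmt_15 (κ : ℝ) (hκ : κ < 0) (α : ℂ) (w : ℝ → ℂ)
    (hw : ∀ s : ℝ, w s = ((Real.cosh (Real.sqrt (-κ) * s / 2) : ℝ) : ℂ) ^ (-2 * α) *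
      hypF α α 1 (Real.tanh (Real.sqrt (-κ) * s / 2) ^ 2)) :
    ∀ s : ℝ, 0 < s →
      -(deriv (deriv w) s)
          - (Real.sqrt (-κ) : ℂ) *
            ((Real.cosh (Real.sqrt (-κ) * s) / Real.sinh (Real.sqrt (-κ) * s) : ℝ) : ℂ) *
            deriv w s
        = (κ : ℂ) * α * (α - 1) * w s := by
  intro s hs
  set q := √(-κ)
  have hq : 0 < q := sqrt_pos.mpr (neg_pos.mpr hκ)
  have hκq : (κ : ℂ) = -q ^ 2 := by
    rw [← Complex.ofReal_pow, sq_sqrt (neg_nonneg.mpr hκ.le)]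
    push_cast
    ring
  have hF := analyticOnNhd_ordinaryHypergeometric α α 1 one_ne_neg_natCast
  have hw' : w = fun s ↦
      (1 - ((tanh (q * s / 2) ^ 2 : ℝ) : ℂ)) ^ α * ₂F₁ α α 1 ((tanh (q * s / 2) ^ 2 : ℝ) : ℂ) :=
    funext fun s ↦ by rw [hw, hypF_eq_ordinaryHypergeometric, ofReal_cosh_cpow_neg_two_mul]
  have hz := ofReal_tanh_sq_mem_ball (q * s / 2)
  rw [hw', radial_laplacian_comp_tanh_sq (analyticOnNhd_one_sub_cpow.mul hF :) (by positivity),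
    one_sub_cpow_mul_ode_of_hypergeometric_ode (α := α) hF (fun _ ↦ rfl) hz
      (by linear_combination ordinaryHypergeometric_ode α α 1 one_ne_neg_natCast hz), hκq]
  ring
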